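/- Let ρ1 ∈ (0,1) and ρ2 ∈ (0,1−ρ1). Then the matrices A and C satisfy A·C = C·Aᵀ. -/

import Mathlib

/-! Since `C` is symmetric, `C * Aᵀ = (A * C)ᵀ`, so the identity says that `A * C` is symmetric.
For a `2 × 2` matrix this is a single equation between the off-diagonal entries, and both entries of
`A * C` equal `-ρ1 (1 - ρ1) (1 - 2 ρ1)`. -/

open Matrix

/-- The Jacobian of the average current of the two-species TASEP. -/
def matA (ρ1 ρ2 : ℝ) : Matrix (Fin 2) (Fin 2) ℝ :=
  !![1 - 2*ρ1, 0; -2*ρ2, 1 - 2*(ρ1 + ρ2)]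

/-- The susceptibility matrix of the two-species TASEP. -/
def matC (ρ1 ρ2 : ℝ) : Matrix (Fin 2) (Fin 2) ℝ :=
  !![ρ1*(1 - ρ1), -(ρ1*(1 - ρ1));
     -(ρ1*(1 - ρ1)), ρ2*(1 - ρ2) + 2*ρ1*(1 - ρ1) - 2*ρ1*ρ2]

theorem Matrix.isSymm_fin_two_iff {α : Type*} (M : Matrix (Fin 2) (Fin 2) α) :
    M.IsSymm ↔ M 0 1 = M 1 0 := by
  refine ⟨fun h => h.apply 1 0, fun h => IsSymm.ext fun i j => ?_⟩
  fin_cases i <;> fin_cases j <;> simp [h]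

theorem Matrix.mul_eq_mul_transpose_iff_isSymm {n α : Type*} [Fintype n] [CommSemiring α]
    {A C : Matrix n n α} (hC : C.IsSymm) : A * C = C * Aᵀ ↔ (A * C).IsSymm := by
  rw [IsSymm, transpose_mul, hC.eq, eq_comm]

theorem matC_isSymm (ρ1 ρ2 : ℝ) : (matC ρ1 ρ2).IsSymm := by
  simp [isSymm_fin_two_iff, matC]

theorem matA_mul_matC_isSymm (ρ1 ρ2 : ℝ) : (matA ρ1 ρ2 * matC ρ1 ρ2).IsSymm := by
  rw [isSymm_fin_two_iff]
  simp only [matA, matC, mul_apply, of_apply, cons_val', cons_val_fin_one, cons_val_zero,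
    cons_val_one, Fin.sum_univ_two]
  ring

theorem matA_mul_matC_eq_matC_mul_matA_transpose_general
    (ρ1 ρ2 : ℝ) :
    matA ρ1 ρ2 * matC ρ1 ρ2 = matC ρ1 ρ2 * (matA ρ1 ρ2)ᵀ :=
  (mul_eq_mul_transpose_iff_isSymm (matC_isSymm ρ1 ρ2)).mpr (matA_mul_matC_isSymm ρ1 ρ2)

/-- The identity A·C = C·Aᵀ for the two-species TASEP. -/
theorem matA_mul_matC_eq_matC_mul_matA_transpose
    (ρ1 ρ2 : ℝ) (h1 : ρ1 ∈ Set.Ioo (0:ℝ) 1) (h2 : ρ2 ∈ Set.Ioo (0:ℝ) (1 - ρ1)) :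
    matA ρ1 ρ2 * matC ρ1 ρ2 = matC ρ1 ρ2 * (matA ρ1 ρ2)ᵀ :=
  matA_mul_matC_eq_matC_mul_matA_transpose_general ρ1 ρ2
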